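/- arXiv:1905.09429 — 4 statements merged into one kernel-verified Lean document; each statement's English description precedes it below -/
import Mathlib

section
/- Let d ≥ 1 and let f, g ∈ ℂ[x,y] be polynomials of degree at most d whose coefficients — the (d+1)(d+2) complex numbers f_{ij}, g_{ij} for i+j ≤ d — are algebraically independent over ℚ. Then the set of common zeros {(a,b) ∈ ℂ² : f(a,b) = 0 and g(a,b) = 0} (the set of singular points of the vector field v = f ∂/∂x + g ∂/∂y) is finite and has exactly d² elements. -/
/-!
Let `R(x) = Res_y(f, g)`. Over an algebraically closed field, and as long as the coefficient
`f_{0d}` of `y^d` in `f` is nonzero, `R(a) = 0` exactly when `f(a, ·)` and `g(a, ·)` have a common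
root. If they have two distinct common roots, the Sylvester matrix at `x = a` has a kernel of
dimension two, so its adjugate vanishes and, by Jacobi's formula, so does `R'(a)`. Hence, once `R`
has degree `d²` and only simple roots, the first projection is a bijection from the common zeros
onto the `d²` roots of `R`.

These requirements amount to the nonvanishing of a single polynomial expression in the
coefficients of `f` and `g`. It does not vanish identically, because for `y^d - 1` and `y - x^d`
the resultant is `±(x^{d²} - 1)`, so it does not vanish at algebraically independent coefficients.
-/

open Polynomial Polynomial.Bivariate Matrix

namespace Matrix

variable {n : Type*} [Fintype n] [DecidableEq n]

theorem adjugate_eq_zero_of_mulVec_eq_zero {K : Type*} [Field K] {A : Matrix n n K} {v w : n → K}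
    (hvw : LinearIndependent K ![v, w]) (hv : A *ᵥ v = 0) (hw : A *ᵥ w = 0) :
    A.adjugate = 0 := by
  ext i j
  -- the cofactor is the determinant of `A` with row `j` replaced by `eᵢ`, which kills any vector
  -- of `ker A` with vanishing `i`-th coordinate
  rw [adjugate_apply, zero_apply, ← exists_mulVec_eq_zero_iff]
  obtain ⟨z, hz0, hzA, hzi⟩ : ∃ z : n → K, z ≠ 0 ∧ A *ᵥ z = 0 ∧ z i = 0 := by
    by_cases hvi : v i = 0
    · exact ⟨v, hvw.ne_zero 0, hv, hvi⟩
    refine ⟨w i • v - v i • w, fun h => hvi ?_, by simp [mulVec_sub, mulVec_smul, hv, hw], ?_⟩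
    · have := LinearIndependent.pair_iff.mp hvw (w i) (-v i) (by rw [neg_smul, ← sub_eq_add_neg, h])
      simpa using this.2
    · simp [mul_comm]
  refine ⟨z, hz0, ?_⟩
  rw [updateRow_mulVec, hzA]
  ext k
  rcases eq_or_ne k j with rfl | hk
  · simp [hzi]
  · simp [hk]

end Matrix

namespace Polynomial

section Determinant

variable {R n : Type*} [CommRing R] [Fintype n] [DecidableEq n]

theorem derivative_det (M : Matrix n n R[X]) :
    derivative M.det = ∑ i, (M.updateCol i fun k => derivative (M k i)).det := by
  simp only [det_apply, derivative_sum, derivative_smul, derivative_prod_finset]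
  rw [Finset.sum_comm]
  refine Finset.sum_congr rfl fun σ _ => ?_
  rw [Finset.smul_sum]
  refine Finset.sum_congr rfl fun i _ => ?_
  rw [← Finset.mul_prod_erase _ _ (Finset.mem_univ i), mul_comm, updateCol_self]
  congr 2
  exact Finset.prod_congr rfl fun j hj => by rw [updateCol_ne (Finset.ne_of_mem_erase hj)]

theorem eval_derivative_det_eq_zero_of_adjugate_eq_zero (M : Matrix n n R[X]) {a : R}
    (h : ((evalRingHom a).mapMatrix M).adjugate = 0) : (derivative M.det).eval a = 0 := by
  rw [derivative_det, eval_finsetSum]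
  refine Finset.sum_eq_zero fun i _ => ?_
  rw [← coe_evalRingHom, RingHom.map_det, RingHom.mapMatrix_apply, map_updateCol, ← cramer_apply,
    cramer_eq_adjugate_mulVec, ← RingHom.mapMatrix_apply, h, zero_mulVec, Pi.zero_apply]

theorem natDegree_det_le_sum_sub_sum (M : Matrix n n R[X]) (r c : n → ℕ)
    (h : ∀ i j, M i j ≠ 0 → (M i j).natDegree + r i ≤ c j) :
    M.det.natDegree ≤ ∑ j, c j - ∑ i, r i := by
  rw [det_apply]
  refine natDegree_sum_le_of_forall_le _ _ fun σ _ => (natDegree_smul_le _ _).trans ?_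
  by_cases hσ : ∏ j, M (σ j) j = 0
  · simp [hσ]
  have hM : ∀ j, M (σ j) j ≠ 0 := fun j hj => hσ (Finset.prod_eq_zero (Finset.mem_univ j) hj)
  have hsum : ∑ j, (M (σ j) j).natDegree + ∑ i, r i ≤ ∑ j, c j := by
    rw [← Equiv.sum_comp σ r, ← Finset.sum_add_distrib]
    exact Finset.sum_le_sum fun j _ => h _ _ (hM j)
  have := natDegree_prod_le (s := Finset.univ) (f := fun j => M (σ j) j)
  omega

end Determinant

section Resultant

theorem resultant_eq_zero_of_isRoot {R : Type*} [CommRing R] {p q : R[X]} {m n : ℕ}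
    (hp : p.natDegree ≤ m) (hq : q.natDegree ≤ n) (hmn : m ≠ 0 ∨ n ≠ 0) {b : R}
    (hpb : p.IsRoot b) (hqb : q.IsRoot b) : p.resultant q m n = 0 := by
  obtain ⟨u, w, -, -, huw⟩ := exists_mul_add_mul_eq_C_resultant p q hp hq hmn
  simpa [hpb.eq_zero, hqb.eq_zero] using congr_arg (eval b) huw.symm

variable {K : Type*} [Field K]

theorem exists_isRoot_of_resultant_eq_zero [IsAlgClosed K] {p q : K[X]} {m n : ℕ}
    (hp : p.natDegree ≤ m) (hlead : p.coeff m ≠ 0) (hq : q.natDegree ≤ n)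
    (h : p.resultant q m n = 0) : ∃ b, p.IsRoot b ∧ q.IsRoot b := by
  have hpm : p.natDegree = m := le_antisymm hp (le_natDegree_of_ne_zero hlead)
  obtain ⟨k, rfl⟩ := Nat.exists_eq_add_of_le hq
  rw [resultant_add_right_deg _ _ _ _ _ le_rfl, ← hpm] at h
  have hres : p.resultant q = 0 := (mul_eq_zero.mp h).resolve_left (pow_ne_zero _ (hpm ▸ hlead))
  simpa [isCoprime_iff_aeval_ne_zero_of_isAlgClosed K K] using (resultant_eq_zero_iff.mp hres).2

theorem mul_X_pow_mem_degreeLT_of_mul_eq {h r s : K[X]} {m k : ℕ} (hs : s.natDegree ≤ m)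
    (hh : k < h.natDegree) (hrs : h * r = s) : r * X ^ k ∈ degreeLT K m := by
  rw [mem_degreeLT]
  by_cases hr : r = 0
  · simp [hr]
  have h0 : h ≠ 0 := by rintro rfl; simp at hh
  have := natDegree_mul h0 hr
  rw [hrs] at this
  refine degree_le_natDegree.trans_lt ?_
  rw [natDegree_mul_X_pow _ hr]
  exact_mod_cast (by omega : r.natDegree + k < m)

theorem adjugate_sylvester_eq_zero_of_dvd {p q h : K[X]} {m n : ℕ} (hp : p.natDegree ≤ m)
    (hq : q.natDegree ≤ n) (hp0 : p ≠ 0) (hh : 2 ≤ h.natDegree) (hdp : h ∣ p) (hdq : h ∣ q) :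
    (sylvester p q m n).adjugate = 0 := by
  obtain ⟨p', rfl⟩ := hdp
  obtain ⟨q', rfl⟩ := hdq
  -- `(u, w) = (p' X^k, -q' X^k)`, `k = 0, 1`, are independent solutions of `p w + q u = 0`
  let x : Fin 2 → degreeLT K m × degreeLT K n := fun k =>
    (⟨p' * X ^ (k : ℕ), mul_X_pow_mem_degreeLT_of_mul_eq hp (by omega) rfl⟩,
     ⟨-(q' * X ^ (k : ℕ)), neg_mem (mul_X_pow_mem_degreeLT_of_mul_eq hq (by omega) rfl)⟩)
  let b := ((degreeLT.basis K m).prod (degreeLT.basis K n)).reindex finSumFinEquiv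
  have hker : ∀ k, sylvester (h * p') (h * q') m n *ᵥ b.equivFun (x k) = 0 := fun k => by
    rw [← toMatrix_sylvesterMap' _ _ hp hq, Module.Basis.equivFun_apply,
      LinearMap.toMatrix_mulVec_repr]
    have : sylvesterMap _ _ hp hq (x k) = 0 := by
      ext1
      simp only [sylvesterMap_apply_coe, x, ZeroMemClass.coe_zero]
      ring
    rw [this, map_zero, Finsupp.coe_zero]
  refine adjugate_eq_zero_of_mulVec_eq_zero ?_ (hker 0) (hker 1)
  rw [LinearIndependent.pair_iff]
  intro s t hst
  rw [← map_smul, ← map_smul, ← map_add, LinearEquiv.map_eq_zero_iff] at hst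
  have h1 : (C s + C t * X) * p' = 0 := by
    have := congr_arg (fun y => (y.1 : K[X])) hst
    simp only [Prod.fst_add, Prod.smul_fst, Submodule.coe_add, Submodule.coe_smul, x,
      smul_eq_C_mul, Prod.fst_zero, ZeroMemClass.coe_zero, Fin.val_zero, Fin.val_one, pow_zero,
      pow_one] at this
    linear_combination this
  have hp'0 : p' ≠ 0 := by rintro rfl; simp at hp0
  have h2 := (mul_eq_zero.mp h1).resolve_right hp'0
  exact ⟨by simpa using congr_arg (coeff · 0) h2, by simpa using congr_arg (coeff · 1) h2⟩

end Resultant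

end Polynomial

namespace Polynomial.Bivariate

section CommRing

variable {R S : Type*} [CommRing R] [CommRing S]

theorem coeff_equivMvPolynomial (P : R[X][Y]) (i j : ℕ) :
    (equivMvPolynomial R P).coeff (Finsupp.single 0 i + Finsupp.single 1 j) =
      (P.coeff j).coeff i := by
  induction P using Polynomial.induction_on' with
  | add P Q hP hQ => simp [hP, hQ]
  | monomial n p =>
    induction p using Polynomial.induction_on' with
    | add p q hp hq => simp_all
    | monomial k a =>
      simp_rw [← C_mul_X_pow_eq_monomial]
      simp only [map_mul, map_pow, equivMvPolynomial_C_C, equivMvPolynomial_C_X,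
        equivMvPolynomial_X, MvPolynomial.X_pow_eq_monomial, MvPolynomial.C_mul_monomial,
        MvPolynomial.monomial_mul]
      rw [← C_pow, ← C_mul, coeff_C_mul_X_pow, MvPolynomial.coeff_monomial]
      have : Finsupp.single 0 k + Finsupp.single 1 n =
          Finsupp.single (0 : Fin 2) i + Finsupp.single 1 j ↔ k = i ∧ n = j := by
        refine ⟨fun h => ⟨by simpa using congr($h 0), by simpa using congr($h 1)⟩, ?_⟩
        rintro ⟨rfl, rfl⟩
        rfl
      rw [if_congr this rfl rfl]
      by_cases hn : j = n <;> by_cases hk : i = k <;> simp [hn, hk, eq_comm]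

theorem evalEval_equivMvPolynomial_symm (f : MvPolynomial (Fin 2) R) (a b : R) :
    ((equivMvPolynomial R).symm f).evalEval a b = MvPolynomial.eval ![a, b] f := by
  induction f using MvPolynomial.induction_on with
  | C r => simp
  | add f g hf hg => simp [hf, hg]
  | mul_X f i hf => fin_cases i <;> simp [hf, evalEval_C]

theorem map_equivMvPolynomial_symm (φ : R →+* S) (f : MvPolynomial (Fin 2) R) :
    ((equivMvPolynomial R).symm f).map (mapRingHom φ) = (equivMvPolynomial S).symm (f.map φ) := by
  induction f using MvPolynomial.induction_on with
  | C r => simp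
  | add f g hf hg => simp [hf, hg]
  | mul_X f i hf => fin_cases i <;> simp [hf]

variable {P Q : R[X][Y]} {m n : ℕ}

theorem natDegree_coeff_le (hP : ∀ i j, m < i + j → (P.coeff j).coeff i = 0) (j : ℕ) :
    (P.coeff j).natDegree ≤ m - j :=
  natDegree_le_iff_coeff_eq_zero.mpr fun i hi => hP i j (by omega)

theorem natDegree_le_of_coeff_coeff_eq_zero (hP : ∀ i j, m < i + j → (P.coeff j).coeff i = 0) :
    P.natDegree ≤ m :=
  natDegree_le_iff_coeff_eq_zero.mpr fun j hj => Polynomial.ext fun i => by simp [hP i j (by omega)]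

theorem coeff_map_evalRingHom (hP : ∀ i j, m < i + j → (P.coeff j).coeff i = 0) (a : R) :
    (P.map (evalRingHom a)).coeff m = (P.coeff m).coeff 0 := by
  rw [coeff_map, eq_C_of_natDegree_le_zero ((natDegree_coeff_le hP m).trans (by omega)),
    coe_evalRingHom, eval_C, coeff_C_zero]

theorem natDegree_resultant_le (hP : ∀ i j, m < i + j → (P.coeff j).coeff i = 0)
    (hQ : ∀ i j, n < i + j → (Q.coeff j).coeff i = 0) :
    (P.resultant Q m n).natDegree ≤ m * n := by
  -- entry `(i, j)` of the Sylvester matrix has degree at most `c j - i`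
  let c : Fin (m + n) → ℕ := Fin.addCases (fun j => n + j) (fun j => m + j)
  refine (natDegree_det_le_sum_sub_sum _ (fun i : Fin (m + n) => (i : ℕ)) c ?_).trans ?_
  · intro i j hij
    induction j using Fin.addCases with
    | left j =>
      simp only [sylvester, of_apply, Fin.addCases_left, Set.mem_Icc, c] at hij ⊢
      split_ifs at hij ⊢
      · have := natDegree_coeff_le hQ (i - j); omega
      · exact absurd rfl hij
    | right j =>
      simp only [sylvester, of_apply, Fin.addCases_right, Set.mem_Icc, c] at hij ⊢
      split_ifs at hij ⊢
      · have := natDegree_coeff_le hP (i - j); omega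
      · exact absurd rfl hij
  · simp only [c, Fin.sum_univ_add, Fin.addCases_left, Fin.addCases_right, Fin.val_castAdd,
      Fin.val_natAdd, Finset.sum_add_distrib, Finset.sum_const, Finset.card_univ, Fintype.card_fin,
      smul_eq_mul]
    omega

end CommRing

section Field

variable {K : Type*} [Field K] {P Q : K[X][Y]} {m n : ℕ}

theorem isRoot_resultant_iff [IsAlgClosed K] (hm : m ≠ 0)
    (hP : ∀ i j, m < i + j → (P.coeff j).coeff i = 0)
    (hQ : ∀ i j, n < i + j → (Q.coeff j).coeff i = 0) (hlead : (P.coeff m).coeff 0 ≠ 0) (a : K) :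
    (P.resultant Q m n).IsRoot a ↔ ∃ b, P.evalEval a b = 0 ∧ Q.evalEval a b = 0 := by
  simp only [IsRoot.def, ← coe_evalRingHom, ← resultant_map_map, ← map_evalRingHom_eval]
  have hp : (P.map (evalRingHom a)).natDegree ≤ m :=
    natDegree_map_le.trans (natDegree_le_of_coeff_coeff_eq_zero hP)
  have hq : (Q.map (evalRingHom a)).natDegree ≤ n :=
    natDegree_map_le.trans (natDegree_le_of_coeff_coeff_eq_zero hQ)
  refine ⟨fun h => ?_, fun ⟨b, hPb, hQb⟩ => resultant_eq_zero_of_isRoot hp hq (.inl hm) hPb hQb⟩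
  exact exists_isRoot_of_resultant_eq_zero hp (by rwa [coeff_map_evalRingHom hP]) hq h

theorem eval_derivative_resultant_eq_zero (hP : ∀ i j, m < i + j → (P.coeff j).coeff i = 0)
    (hQ : ∀ i j, n < i + j → (Q.coeff j).coeff i = 0) (hlead : (P.coeff m).coeff 0 ≠ 0)
    {a b₁ b₂ : K} (hb : b₁ ≠ b₂) (hP₁ : P.evalEval a b₁ = 0) (hQ₁ : Q.evalEval a b₁ = 0)
    (hP₂ : P.evalEval a b₂ = 0) (hQ₂ : Q.evalEval a b₂ = 0) :
    (derivative (P.resultant Q m n)).eval a = 0 := by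
  refine eval_derivative_det_eq_zero_of_adjugate_eq_zero _ ?_
  rw [← sylvester_map_map]
  have hdvd : ∀ F : K[X][Y], F.evalEval a b₁ = 0 → F.evalEval a b₂ = 0 →
      (X - C b₁) * (X - C b₂) ∣ F.map (evalRingHom a) := fun F h₁ h₂ =>
    (isCoprime_X_sub_C_of_isUnit_sub (sub_ne_zero.mpr hb).isUnit).mul_dvd
      (dvd_iff_isRoot.mpr (by simpa [map_evalRingHom_eval]))
      (dvd_iff_isRoot.mpr (by simpa [map_evalRingHom_eval]))
  refine adjugate_sylvester_eq_zero_of_dvd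
    (natDegree_map_le.trans (natDegree_le_of_coeff_coeff_eq_zero hP))
    (natDegree_map_le.trans (natDegree_le_of_coeff_coeff_eq_zero hQ)) ?_ ?_ (hdvd P hP₁ hP₂)
    (hdvd Q hQ₁ hQ₂)
  · intro h0
    exact hlead (by rw [← coeff_map_evalRingHom hP a, h0, coeff_zero])
  · rw [natDegree_mul (X_sub_C_ne_zero _) (X_sub_C_ne_zero _), natDegree_X_sub_C,
      natDegree_X_sub_C]

end Field

end Polynomial.Bivariate

namespace MvPolynomial

section CommRing

variable {R S : Type*} [CommRing R] [CommRing S]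

theorem coeff_eq_zero_of_totalDegree_le {f : MvPolynomial (Fin 2) R} {d : ℕ}
    (hf : f.totalDegree ≤ d) {s : Fin 2 →₀ ℕ} (hs : d < s 0 + s 1) : f.coeff s = 0 := by
  refine coeff_eq_zero_of_totalDegree_lt ?_
  rw [← Finsupp.degree_apply, Finsupp.degree_eq_sum, Fin.sum_univ_two]
  omega

theorem coeff_coeff_equivMvPolynomial_symm (f : MvPolynomial (Fin 2) R) (i j : ℕ) :
    (((equivMvPolynomial R).symm f).coeff j).coeff i =
      f.coeff (Finsupp.single 0 i + Finsupp.single 1 j) := by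
  rw [← coeff_equivMvPolynomial, AlgEquiv.apply_symm_apply]

theorem coeff_coeff_equivMvPolynomial_symm_eq_zero {f : MvPolynomial (Fin 2) R} {d : ℕ}
    (hf : f.totalDegree ≤ d) (i j : ℕ) (hij : d < i + j) :
    (((equivMvPolynomial R).symm f).coeff j).coeff i = 0 := by
  rw [coeff_coeff_equivMvPolynomial_symm]
  exact coeff_eq_zero_of_totalDegree_le hf (by simpa using hij)

/-- `Res_y(f, g) ∈ R[x]`, where `x = X 0` becomes the inner and `y = X 1` the outer variable of
`R[X][Y]`. -/
noncomputable def resultantY (m n : ℕ) (f g : MvPolynomial (Fin 2) R) : R[X] :=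
  ((equivMvPolynomial R).symm f).resultant ((equivMvPolynomial R).symm g) m n

/-- Its nonvanishing says that `y^m` occurs in `f`, that `Res_y(f, g)` has degree `mn`, and that
`Res_y(f, g)` shares no root with its derivative. -/
noncomputable def nondegeneracy (m n : ℕ) (f g : MvPolynomial (Fin 2) R) : R :=
  f.coeff (Finsupp.single 1 m) * (resultantY m n f g).coeff (m * n) *
    (resultantY m n f g).resultant (derivative (resultantY m n f g)) (m * n) (m * n - 1)

theorem map_resultantY (φ : R →+* S) (m n : ℕ) (f g : MvPolynomial (Fin 2) R) :
    (resultantY m n f g).map φ = resultantY m n (f.map φ) (g.map φ) := by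
  rw [resultantY, resultantY, ← map_equivMvPolynomial_symm, ← map_equivMvPolynomial_symm,
    resultant_map_map, coe_mapRingHom]

theorem map_nondegeneracy (φ : R →+* S) (m n : ℕ) (f g : MvPolynomial (Fin 2) R) :
    φ (nondegeneracy m n f g) = nondegeneracy m n (f.map φ) (g.map φ) := by
  rw [nondegeneracy, nondegeneracy, map_mul, map_mul, ← map_resultantY, derivative_map,
    resultant_map_map, Polynomial.coeff_map, MvPolynomial.coeff_map]

end CommRing

section Witness

variable {K : Type*} [Field K] {m n : ℕ}

theorem resultantY_witness (hm : m ≠ 0) (hn : n ≠ 0) :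
    resultantY m n (X 1 ^ m - 1 : MvPolynomial (Fin 2) K) (X 1 - X 0 ^ n) =
      (Polynomial.X ^ (m * n) - 1) * Polynomial.C ((-1) ^ m) := by
  have hf : ((Y : K[X][Y]) ^ m - 1).natDegree ≤ m := by
    simpa using natDegree_sub_le ((Y : K[X][Y]) ^ m) 1
  obtain ⟨k, rfl⟩ := Nat.exists_eq_add_of_le (Nat.one_le_iff_ne_zero.mpr hn)
  rw [resultantY, map_sub, map_sub, map_pow, map_pow, map_one, equivMvPolynomial_symm_X_1,
    equivMvPolynomial_symm_X_0, ← Polynomial.C_pow,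
    resultant_add_right_deg _ _ _ _ _ (natDegree_X_sub_C_le _), resultant_X_sub_C_right _ _ _ hf]
  simp [← pow_mul, Polynomial.coeff_one, hm]
  ring

theorem nondegeneracy_witness_ne_zero [CharZero K] (hm : m ≠ 0) (hn : n ≠ 0) :
    nondegeneracy m n (X 1 ^ m - 1 : MvPolynomial (Fin 2) K) (X 1 - X 0 ^ n) ≠ 0 := by
  have hmn : m * n ≠ 0 := mul_ne_zero hm hn
  have hu : ((-1) ^ m : K) ≠ 0 := by simp
  set R : K[X] := (Polynomial.X ^ (m * n) - 1) * Polynomial.C ((-1) ^ m)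
  have hR : R.natDegree = m * n := by
    rw [natDegree_mul_C hu, ← Polynomial.C_1, natDegree_X_pow_sub_C]
  have hsep : R.Separable := by
    have : (Polynomial.X ^ (m * n) - 1 : K[X]).Separable := by
      simpa using separable_X_pow_sub_C (1 : K) (by exact_mod_cast hmn) one_ne_zero
    exact this.mul_unit (Polynomial.isUnit_C.mpr hu.isUnit)
  have hres := resultant_ne_zero R (derivative R) hsep
  rw [natDegree_derivative, hR] at hres
  rw [nondegeneracy, resultantY_witness hm hn]
  refine mul_ne_zero (mul_ne_zero ?_ ?_) hres
  · simp [MvPolynomial.coeff_X_pow, MvPolynomial.coeff_one, eq_comm (a := (0 : Fin 2 →₀ ℕ)),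
      Finsupp.single_eq_zero, hm]
  · rw [Polynomial.coeff_mul_C]
    simp [Polynomial.coeff_one, hmn]

end Witness

section Generic

instance (d : ℕ) : Fintype {ij : ℕ × ℕ // ij.1 + ij.2 ≤ d} :=
  Fintype.subtype ((Finset.range (d + 1) ×ˢ Finset.range (d + 1)).filter fun ij => ij.1 + ij.2 ≤ d)
    fun ij => by simp only [Finset.mem_filter, Finset.mem_product, Finset.mem_range]; omega

noncomputable def genericPoly (k : Type*) [CommRing k] (d : ℕ) (b : Bool) :
    MvPolynomial (Fin 2) (MvPolynomial (Bool × {ij : ℕ × ℕ // ij.1 + ij.2 ≤ d}) k) :=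
  ∑ c : {ij : ℕ × ℕ // ij.1 + ij.2 ≤ d},
    monomial (Finsupp.single 0 c.1.1 + Finsupp.single 1 c.1.2) (X (b, c))

variable {K : Type*} [CommRing K]

noncomputable def coeffFamily (d : ℕ) (f g : MvPolynomial (Fin 2) K) :
    Bool × {ij : ℕ × ℕ // ij.1 + ij.2 ≤ d} → K :=
  fun c => coeff (Finsupp.single 0 c.2.1.1 + Finsupp.single 1 c.2.1.2) (if c.1 then f else g)

theorem map_aeval_genericPoly {k : Type*} [CommRing k] [Algebra k K] {d : ℕ}
    {f g : MvPolynomial (Fin 2) K} (hf : f.totalDegree ≤ d) (hg : g.totalDegree ≤ d) (b : Bool) :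
    (genericPoly k d b).map (aeval (coeffFamily d f g)).toRingHom = if b then f else g := by
  ext s
  have hs : Finsupp.single 0 (s 0) + Finsupp.single 1 (s 1) = s := by
    ext i; fin_cases i <;> simp
  simp only [genericPoly, coeff_map, coeff_sum, coeff_monomial, map_sum]
  by_cases hd : s 0 + s 1 ≤ d
  · rw [Finset.sum_eq_single ⟨(s 0, s 1), hd⟩]
    · simp [hs, coeffFamily]
    · rintro c - hc
      rw [if_neg, map_zero]
      rintro rfl
      exact hc (Subtype.ext (by simp))
    · simp
  · rw [Finset.sum_eq_zero]
    · split_ifs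
      · exact (coeff_eq_zero_of_totalDegree_le hf (by omega)).symm
      · exact (coeff_eq_zero_of_totalDegree_le hg (by omega)).symm
    · rintro c -
      rw [if_neg, map_zero]
      rintro rfl
      have := c.2
      simp at hd
      omega

theorem nondegeneracy_ne_zero_of_algebraicIndependent {k : Type*} [Field k] [CharZero k]
    [Algebra k K] {d : ℕ} (hd : d ≠ 0) {f g : MvPolynomial (Fin 2) K} (hf : f.totalDegree ≤ d)
    (hg : g.totalDegree ≤ d) (hindep : AlgebraicIndependent k (coeffFamily d f g)) :
    nondegeneracy d d f g ≠ 0 := by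
  have hf₀ : (X 1 ^ d - 1 : MvPolynomial (Fin 2) k).totalDegree ≤ d :=
    (totalDegree_sub _ _).trans (by simp)
  have hg₀ : (X 1 - X 0 ^ d : MvPolynomial (Fin 2) k).totalDegree ≤ d :=
    (totalDegree_sub _ _).trans (by simp; omega)
  have hgeneric : nondegeneracy d d (genericPoly k d true) (genericPoly k d false) ≠ 0 := by
    intro h
    have := map_nondegeneracy (aeval (coeffFamily d (X 1 ^ d - 1 : MvPolynomial (Fin 2) k)
      (X 1 - X 0 ^ d))).toRingHom d d (genericPoly k d true) (genericPoly k d false)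
    rw [h, map_zero, map_aeval_genericPoly hf₀ hg₀, map_aeval_genericPoly hf₀ hg₀] at this
    exact nondegeneracy_witness_ne_zero hd hd (by simpa using this.symm)
  have := map_nondegeneracy (aeval (coeffFamily d f g)).toRingHom d d (genericPoly k d true)
    (genericPoly k d false)
  rw [map_aeval_genericPoly hf hg, map_aeval_genericPoly hf hg] at this
  simp only [if_true, Bool.false_eq_true, if_false] at this
  rw [← this]
  exact (map_ne_zero_iff _ (algebraicIndependent_iff_injective_aeval.mp hindep)).mpr hgeneric

end Generic

def commonZeros {K : Type*} [CommRing K] (f g : MvPolynomial (Fin 2) K) : Set (K × K) :=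
  {ab | eval ![ab.1, ab.2] f = 0 ∧ eval ![ab.1, ab.2] g = 0}

section Count

variable {K : Type*} [Field K] {m n : ℕ} {f g : MvPolynomial (Fin 2) K}

theorem isRoot_resultantY_iff [IsAlgClosed K] (hm : m ≠ 0) (hf : f.totalDegree ≤ m)
    (hg : g.totalDegree ≤ n) (hlead : f.coeff (Finsupp.single 1 m) ≠ 0) (a : K) :
    (resultantY m n f g).IsRoot a ↔ ∃ b, (a, b) ∈ commonZeros f g := by
  simp only [commonZeros, Set.mem_ofPred_eq, ← evalEval_equivMvPolynomial_symm]
  refine isRoot_resultant_iff hm (coeff_coeff_equivMvPolynomial_symm_eq_zero hf)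
    (coeff_coeff_equivMvPolynomial_symm_eq_zero hg) ?_ a
  rwa [coeff_coeff_equivMvPolynomial_symm, Finsupp.single_zero, zero_add]

theorem eval_derivative_resultantY_eq_zero (hf : f.totalDegree ≤ m) (hg : g.totalDegree ≤ n)
    (hlead : f.coeff (Finsupp.single 1 m) ≠ 0) {a b₁ b₂ : K} (hb : b₁ ≠ b₂)
    (h₁ : (a, b₁) ∈ commonZeros f g) (h₂ : (a, b₂) ∈ commonZeros f g) :
    (derivative (resultantY m n f g)).eval a = 0 := by
  simp only [commonZeros, Set.mem_ofPred_eq, ← evalEval_equivMvPolynomial_symm] at h₁ h₂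
  refine eval_derivative_resultant_eq_zero (coeff_coeff_equivMvPolynomial_symm_eq_zero hf)
    (coeff_coeff_equivMvPolynomial_symm_eq_zero hg) ?_ hb h₁.1 h₁.2 h₂.1 h₂.2
  rwa [coeff_coeff_equivMvPolynomial_symm, Finsupp.single_zero, zero_add]

theorem commonZeros_finite_and_ncard_eq [IsAlgClosed K] (hm : m ≠ 0) (hn : n ≠ 0)
    (hf : f.totalDegree ≤ m) (hg : g.totalDegree ≤ n) (hnd : nondegeneracy m n f g ≠ 0) :
    (commonZeros f g).Finite ∧ (commonZeros f g).ncard = m * n := by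
  classical
  simp only [nondegeneracy, mul_ne_zero_iff] at hnd
  obtain ⟨⟨hlead, hRlead⟩, hsimple⟩ := hnd
  set R := resultantY m n f g
  have hRdeg : R.natDegree = m * n := le_antisymm
    (natDegree_resultant_le (coeff_coeff_equivMvPolynomial_symm_eq_zero hf)
      (coeff_coeff_equivMvPolynomial_symm_eq_zero hg))
    (le_natDegree_of_ne_zero hRlead)
  have hR0 : R ≠ 0 := fun h => hRlead (by rw [h, Polynomial.coeff_zero])
  have hsimple' : ∀ a, R.IsRoot a → ¬ (derivative R).IsRoot a := fun a ha ha' =>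
    hsimple (resultant_eq_zero_of_isRoot hRdeg.le
      ((natDegree_derivative_le R).trans (by rw [hRdeg])) (.inl (mul_ne_zero hm hn)) ha ha')
  have hsep : R.Separable :=
    (isCoprime_iff_aeval_ne_zero_of_isAlgClosed K K _ _).mpr fun a => by
      simpa [or_iff_not_imp_left] using hsimple' a
  have hinj : Set.InjOn Prod.fst (commonZeros f g) := by
    rintro ⟨a, b₁⟩ h₁ ⟨a', b₂⟩ h₂ (rfl : a = a')
    by_contra hne
    exact hsimple' a ((isRoot_resultantY_iff hm hf hg hlead a).mpr ⟨b₁, h₁⟩)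
      (eval_derivative_resultantY_eq_zero hf hg hlead (fun h => hne (by rw [h])) h₁ h₂)
  have himage : Prod.fst '' commonZeros f g = R.roots.toFinset := by
    ext a
    rw [Finset.mem_coe, Multiset.mem_toFinset, mem_roots hR0, isRoot_resultantY_iff hm hf hg hlead]
    simp
  refine ⟨Set.Finite.of_finite_image (himage ▸ Finset.finite_toSet _) hinj, ?_⟩
  rw [← hinj.ncard_image, himage, Set.ncard_coe_finset, Multiset.toFinset_card_of_nodup
    (nodup_roots hsep), ← (IsAlgClosed.splits R).natDegree_eq_card_roots, hRdeg]

end Count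

end MvPolynomial

open MvPolynomial

/-- number of singular points.
Let `d ≥ 1` and let `f, g ∈ ℂ[x,y]` have degree at most `d`, with the
`(d+1)(d+2)` coefficients `f_{ij}, g_{ij}` (`i + j ≤ d`) algebraically
independent over `ℚ`. Then the set of common zeros of `f` and `g` in `ℂ²`
(the singular points of `v = f ∂/∂x + g ∂/∂y`) is finite of cardinality `d²`. -/
theorem card_singular_points
    (d : ℕ) (hd : 1 ≤ d)
    (f g : MvPolynomial (Fin 2) ℂ)
    (hf : f.totalDegree ≤ d) (hg : g.totalDegree ≤ d)
    (hindep : AlgebraicIndependent ℚ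
      (fun c : Bool × {ij : ℕ × ℕ // ij.1 + ij.2 ≤ d} =>
        MvPolynomial.coeff
          (Finsupp.single (0 : Fin 2) c.2.1.1 + Finsupp.single (1 : Fin 2) c.2.1.2)
          (if c.1 then f else g))) :
    {ab : ℂ × ℂ | MvPolynomial.eval ![ab.1, ab.2] f = 0 ∧
        MvPolynomial.eval ![ab.1, ab.2] g = 0}.Finite ∧
      {ab : ℂ × ℂ | MvPolynomial.eval ![ab.1, ab.2] f = 0 ∧
        MvPolynomial.eval ![ab.1, ab.2] g = 0}.ncard = d ^ 2 := by
  have hd0 : d ≠ 0 := by omega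
  rw [sq]
  exact commonZeros_finite_and_ncard_eq hd0 hd0 hf hg
    (nondegeneracy_ne_zero_of_algebraicIndependent hd0 hf hg hindep)
end

section
/- Let A be a unique factorization domain containing ℚ and let δ : A → A be a derivation. Let p ∈ A be a nonzero non-unit such that δ(p) belongs to the principal ideal (p). Then for every irreducible factor q of p, δ(q) belongs to the principal ideal (q). -/
/-!
Write `p = q ^ (n + 1) * r` with `q ∤ r`. By the Leibniz rule
`δ p = q ^ (n + 1) * δ r + (n + 1) * q ^ n * r * δ q`, so `q ^ (n + 1) ∣ δ p` forces
`q ∣ (n + 1) * r * δ q`. Since `n + 1` is invertible in a `ℚ`-algebra and `q` is a prime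
not dividing `r`, this gives `q ∣ δ q`.
-/

namespace Derivation

variable {R A : Type*} [CommSemiring R] [CommRing A] [IsDomain A] [Algebra R A]

theorem dvd_natCast_mul_mul_apply_of_pow_dvd_apply (D : Derivation R A A) {q r : A}
    (hq : q ≠ 0) (n : ℕ) (h : q ^ (n + 1) ∣ D (q ^ (n + 1) * r)) :
    q ∣ ((n + 1 : ℕ) : A) * r * D q := by
  have hD : D (q ^ (n + 1) * r) = q ^ (n + 1) * D r + q ^ n * (((n + 1 : ℕ) : A) * r * D q) := by
    rw [leibniz, leibniz_pow, Nat.add_sub_cancel, smul_eq_mul, smul_eq_mul, nsmul_eq_mul]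
    ring
  rw [hD, dvd_add_right (dvd_mul_right _ _), pow_succ] at h
  exact (mul_dvd_mul_iff_left (pow_ne_zero n hq)).mp h

theorem dvd_apply_of_pow_mul_dvd_apply [Algebra ℚ A] (D : Derivation R A A) {q r : A}
    (hq : Prime q) (hr : ¬ q ∣ r) (n : ℕ) (h : q ^ (n + 1) ∣ D (q ^ (n + 1) * r)) :
    q ∣ D q := by
  have hn : IsUnit ((n + 1 : ℕ) : A) := by
    rw [← _root_.map_natCast (algebraMap ℚ A)]
    exact (Nat.cast_ne_zero.mpr n.succ_ne_zero).isUnit.map _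
  have h' := dvd_natCast_mul_mul_apply_of_pow_dvd_apply D hq.ne_zero n h
  rw [mul_assoc, hn.dvd_mul_left] at h'
  exact (hq.dvd_or_dvd h').resolve_left hr

end Derivation

theorem irreducible_factor_invariant_general
    (A : Type*) [CommRing A] [IsDomain A] [UniqueFactorizationMonoid A]
    [Algebra ℚ A] (δ : Derivation ℚ A A)
    (p : A) (hp0 : p ≠ 0)
    (hp : δ p ∈ Ideal.span {p})
    (q : A) (hq : Irreducible q) (hqp : q ∣ p) :
    δ q ∈ Ideal.span {q} := by
  rw [Ideal.mem_span_singleton] at hp ⊢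
  obtain ⟨n, r, hr, rfl⟩ := WfDvdMonoid.max_power_factor hp0 hq
  cases n with
  | zero => exact absurd (by simpa using hqp) hr
  | succ n =>
    exact δ.dvd_apply_of_pow_mul_dvd_apply hq.prime hr n ((dvd_mul_right _ r).trans hp)

/-- irreducible components of an invariant divisor are
invariant. Let `A` be a UFD containing `ℚ` and `δ` a derivation of `A`.
If `p ∈ A` is a nonzero non-unit with `δ p ∈ (p)`, then every irreducible
factor `q` of `p` satisfies `δ q ∈ (q)`.  (Note that on a `ℚ`-algebra every
additive map satisfying the Leibniz rule is automatically `ℚ`-linear.) -/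
theorem irreducible_factor_invariant
    (A : Type*) [CommRing A] [IsDomain A] [UniqueFactorizationMonoid A]
    [Algebra ℚ A] (δ : Derivation ℚ A A)
    (p : A) (hp0 : p ≠ 0) (hpu : ¬ IsUnit p)
    (hp : δ p ∈ Ideal.span {p})
    (q : A) (hq : Irreducible q) (hqp : q ∣ p) :
    δ q ∈ Ideal.span {q} :=
  irreducible_factor_invariant_general A δ p hp0 hp q hq hqp
end

section
/- Let A be a commutative ring containing ℚ, let δ : A → A be a derivation, and let I be an ideal of A with δ(I) ⊆ I. Then the radical √I also satisfies δ(√I) ⊆ √I. -/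
/-!
If `a ^ m ∈ I`, differentiating `a ^ (k + 1) * (δ a) ^ n ∈ I` and multiplying by `δ a` gives
`(k + 1) a ^ k (δ a) ^ (n + 2) ∈ I` modulo a multiple of `a ^ (k + 1) * (δ a) ^ n` itself.
Since `k + 1` is invertible in a `ℚ`-algebra, each step trades one power of `a` for two powers
of `δ a`; after `m` steps, `(δ a) ^ (2 * m) ∈ I`.
-/

theorem Ideal.mem_of_natCast_mul_mem {A : Type*} [CommRing A] [Algebra ℚ A] {I : Ideal A}
    {n : ℕ} (hn : n ≠ 0) {x : A} (h : (n : A) * x ∈ I) : x ∈ I := by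
  have hunit : IsUnit (n : A) := by
    simpa using ((Nat.cast_ne_zero (R := ℚ)).mpr hn).isUnit.map (algebraMap ℚ A)
  exact (I.unit_mul_mem_iff_mem hunit).mp h

namespace Derivation

variable {R A : Type*} [CommRing R] [CommRing A] [Algebra R A] (D : Derivation R A A)

theorem apply_mul_apply_pow_mul_apply_pow (a : A) (k n : ℕ) :
    D a * D (a ^ (k + 1) * D a ^ n) =
      (k + 1 : ℕ) * (a ^ k * D a ^ (n + 2)) + n * D (D a) * (a ^ (k + 1) * D a ^ n) := by
  rcases n with _ | n
  · simp only [leibniz, leibniz_pow, pow_zero, map_one_eq_zero, smul_eq_mul, nsmul_eq_mul]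
    push_cast
    ring
  · simp only [leibniz, leibniz_pow, Nat.add_sub_cancel, smul_eq_mul, nsmul_eq_mul]
    push_cast
    ring

variable [Algebra ℚ A] {I : Ideal A}

theorem pow_mul_apply_pow_add_two_mem (hI : ∀ x ∈ I, D x ∈ I) {a : A} {k n : ℕ}
    (h : a ^ (k + 1) * D a ^ n ∈ I) : a ^ k * D a ^ (n + 2) ∈ I := by
  refine Ideal.mem_of_natCast_mul_mem (Nat.succ_ne_zero k) ?_
  have hsum : (k + 1 : ℕ) * (a ^ k * D a ^ (n + 2)) + n * D (D a) * (a ^ (k + 1) * D a ^ n) ∈ I :=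
    apply_mul_apply_pow_mul_apply_pow D a k n ▸ I.mul_mem_left _ (hI _ h)
  exact (I.add_mem_iff_left (I.mul_mem_left _ h)).mp hsum

theorem pow_sub_mul_apply_pow_two_mul_mem (hI : ∀ x ∈ I, D x ∈ I) {a : A} {m : ℕ}
    (h : a ^ m ∈ I) {j : ℕ} (hj : j ≤ m) : a ^ (m - j) * D a ^ (2 * j) ∈ I := by
  induction j with
  | zero => simpa using h
  | succ j ih =>
    have hprev : a ^ (m - (j + 1) + 1) * D a ^ (2 * j) ∈ I := by
      rw [show m - (j + 1) + 1 = m - j by omega]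
      exact ih (by omega)
    exact pow_mul_apply_pow_add_two_mem D hI hprev

end Derivation

/-- the radical of a differential ideal is differential.
Let `A` be a commutative ring containing `ℚ`, `δ` a derivation of `A` and `I`
an ideal with `δ(I) ⊆ I`. Then `δ(√I) ⊆ √I`.  (Note that on a `ℚ`-algebra
every additive map satisfying the Leibniz rule is automatically `ℚ`-linear.) -/
theorem radical_of_differential_ideal_is_differential
    (A : Type*) [CommRing A] [Algebra ℚ A] (δ : Derivation ℚ A A)
    (I : Ideal A) (hI : ∀ a ∈ I, δ a ∈ I) :
    ∀ a ∈ I.radical, δ a ∈ I.radical := by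
  rintro a ⟨m, hm⟩
  refine ⟨2 * m, ?_⟩
  simpa using δ.pow_sub_mul_apply_pow_two_mul_mem hI hm le_rfl
end

section
/- Let A be a commutative Noetherian ring containing ℚ, let δ : A → A be a derivation, and let I be an ideal of A with δ(I) ⊆ I. Then every minimal prime ideal P over I satisfies δ(P) ⊆ P. -/
/-!
Over `ℚ` the radical of a differential ideal `I` is differential: differentiating
`a ^ (m + 1) * (δ a) ^ (2 * k) ∈ I` and multiplying by `δ a` shows that
`(m + 1) * a ^ m * (δ a) ^ (2 * k + 2)` lies in `I`, and `m + 1` is a unit; starting from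
`aⁿ ∈ I` this descends to `(δ a) ^ (2 * n) ∈ I`.
In a Noetherian ring a minimal prime `P` over `√I` is a colon ideal `√I : b` with `b ∉ P`.
For `a ∈ P` the element `δ (a * b) = a * δ b + b * δ a` lies in `√I ⊆ P`, so `b * δ a ∈ P`.
-/
namespace Derivation

variable {R A : Type*} [CommSemiring R] [CommRing A] [Algebra R A] (δ : Derivation R A A)

theorem leibniz_pow_mul_self (x : A) (n : ℕ) : δ (x ^ n) * x = n • x ^ n * δ x := by
  rcases eq_or_ne n 0 with rfl | hn
  · simp
  · rw [leibniz_pow, smul_eq_mul, nsmul_eq_mul, nsmul_eq_mul, ← pow_sub_one_mul hn x]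
    ring

end Derivation

namespace Ideal

theorem mem_of_natCast_succ_mul_mem {A : Type*} [CommRing A] [Algebra ℚ A] {I : Ideal A}
    {x : A} (n : ℕ) (h : ((n + 1 : ℕ) : A) * x ∈ I) : x ∈ I := by
  have hunit : IsUnit ((n + 1 : ℕ) : A) := by
    rw [← map_natCast (algebraMap ℚ A)]
    exact (Nat.cast_ne_zero.mpr n.succ_ne_zero).isUnit.map _
  exact (I.unit_mul_mem_iff_mem hunit).mp h

theorem exists_notMem_forall_mul_mem_radical {A : Type*} [CommRing A] [IsNoetherianRing A]
    {I P : Ideal A} (hP : P ∈ I.minimalPrimes) : ∃ b ∉ P, ∀ a ∈ P, a * b ∈ I.radical := by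
  have hP' : P ∈ (I.radical.colon {1}).minimalPrimes := by
    have : I.radical.colon {1} = I.radical := by ext; simp [Submodule.mem_colon_singleton]
    rwa [this, radical_minimalPrimes]
  obtain ⟨b, rfl⟩ := Submodule.exists_eq_colon_of_mem_minimalPrimes hP'
  refine ⟨b, fun hb ↦ ?_, fun a ha ↦ Submodule.mem_colon_singleton.mp ha⟩
  have hb' : b ∈ I.radical :=
    I.radical_isRadical ⟨2, by simpa [sq] using Submodule.mem_colon_singleton.mp hb⟩
  exact hP.isPrime.ne_top ((eq_top_iff_one _).mpr (Submodule.mem_colon_singleton.mpr (by simpa)))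

variable {R A : Type*} [CommSemiring R] [CommRing A] [Algebra R A] {δ : Derivation R A A}
  {I : Ideal A}

theorem deriv_mem_of_mul_mem {P : Ideal A} [P.IsPrime] (hIP : I ≤ P)
    (hI : ∀ a ∈ I, δ a ∈ I) {b : A} (hb : b ∉ P) (hPb : ∀ a ∈ P, a * b ∈ I) :
    ∀ a ∈ P, δ a ∈ P := by
  intro a ha
  have hδ : a * δ b + b * δ a ∈ P := by simpa [δ.leibniz, add_comm] using hIP (hI _ (hPb a ha))
  have : b * δ a ∈ P := by simpa using P.sub_mem hδ (P.mul_mem_right (δ b) ha)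
  exact (‹P.IsPrime›.mem_or_mem this).resolve_left hb

variable [Algebra ℚ A]

theorem pow_mul_deriv_pow_mem_of_pow_succ_mul_mem (hI : ∀ a ∈ I, δ a ∈ I) {a : A} {m k : ℕ}
    (h : a ^ (m + 1) * δ a ^ (2 * k) ∈ I) : a ^ m * δ a ^ (2 * (k + 1)) ∈ I := by
  have key : ((m + 1 : ℕ) : A) * (a ^ m * δ a ^ (2 * (k + 1))) =
      δ (a ^ (m + 1) * δ a ^ (2 * k)) * δ a -
        ((2 * k : ℕ) : A) * (a ^ (m + 1) * δ a ^ (2 * k)) * δ (δ a) := by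
    rw [δ.leibniz, smul_eq_mul, smul_eq_mul, add_mul, mul_assoc, δ.leibniz_pow_mul_self,
      δ.leibniz_pow, nsmul_eq_mul, nsmul_eq_mul, smul_eq_mul, Nat.add_sub_cancel]
    push_cast
    ring
  exact mem_of_natCast_succ_mul_mem m <| key ▸
    I.sub_mem (I.mul_mem_right _ (hI _ h)) (I.mul_mem_right _ (I.mul_mem_left _ h))

theorem pow_mul_deriv_pow_mem (hI : ∀ a ∈ I, δ a ∈ I) {a : A} {m k : ℕ} (h : a ^ (m + k) ∈ I) :
    a ^ m * δ a ^ (2 * k) ∈ I := by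
  induction k generalizing m with
  | zero => simpa using h
  | succ k ih =>
    exact pow_mul_deriv_pow_mem_of_pow_succ_mul_mem hI (ih (by rwa [add_right_comm]))

theorem deriv_mem_radical (hI : ∀ a ∈ I, δ a ∈ I) : ∀ a ∈ I.radical, δ a ∈ I.radical := by
  rintro a ⟨n, hn⟩
  exact ⟨2 * n, by simpa using pow_mul_deriv_pow_mem (m := 0) hI (by simpa using hn)⟩

end Ideal

/-- minimal primes over a differential ideal are
differential. Let `A` be a commutative Noetherian ring containing `ℚ`, `δ` a
derivation of `A` and `I` an ideal with `δ(I) ⊆ I`. Then every minimal prime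
`P` over `I` satisfies `δ(P) ⊆ P`.  (Note that on a `ℚ`-algebra every additive
map satisfying the Leibniz rule is automatically `ℚ`-linear.) -/
theorem minimal_prime_over_differential_ideal_is_differential
    (A : Type*) [CommRing A] [IsNoetherianRing A] [Algebra ℚ A]
    (δ : Derivation ℚ A A)
    (I : Ideal A) (hI : ∀ a ∈ I, δ a ∈ I)
    (P : Ideal A) (hP : P ∈ I.minimalPrimes) :
    ∀ a ∈ P, δ a ∈ P := by
  have := hP.isPrime
  obtain ⟨b, hbP, hPb⟩ := Ideal.exists_notMem_forall_mul_mem_radical hP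
  exact Ideal.deriv_mem_of_mul_mem (hP.isPrime.radical_le_iff.mpr hP.1.2)
    (Ideal.deriv_mem_radical hI) hbP hPb
end
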